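/- Let x ∈ ℝ^d be written in blocks x = (x₁,…,x_m) with x_i ∈ ℝ^{d̄}, set x₀ = x_{m+1} = 0 ∈ ℝ^{d̄}, and let y ∈ ℝ^{n̄} be written in blocks y = (y₁,…,y_{3m₂−1}) with y_j ∈ ℝ^{d̄}. Then: (a) for any x̂ ∈ span{AᵀAx, ĀᵀĀx} written in blocks (x̂₁,…,x̂_m), supp(x̂_i) ⊆ supp(x_{i−1}) ∪ supp(x_i) ∪ supp(x_{i+1}) for all i = 1,…,m; (b) writing x̃ = Āᵀy in blocks (x̃₁,…,x̃_m), supp(x̃_i) = ∅ if neither i−1 nor i lies in 𝓜, supp(x̃_i) ⊆ supp(y_j) if i−1 = j·m₁ ∈ 𝓜, and supp(x̃_i) ⊆ supp(y_j) if i = j·m₁ ∈ 𝓜; (c) writing ŷ = Āx in blocks (ŷ₁,…,ŷ_{3m₂−1}), supp(ŷ_j) ⊆ supp(x_{j·m₁}) ∪ supp(x_{j·m₁+1}) for all j = 1,…,3m₂−1; (d) ĀĀᵀ = 2m²·L_f²·I_{n̄}, and hence supp(ĀĀᵀy) = supp(y) for all y ∈ ℝ^{n̄}; (e) for any η > 0,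 writing ỹ = prox_{ηḡ}(y) in blocks (ỹ₁,…,ỹ_{3m₂−1}), supp(ỹ_j) ⊆ supp(y_j) for all j = 1,…,3m₂−1. -/

import Mathlib

open Real Matrix Finset
open scoped Kronecker

noncomputable section

def Psi (u : ℝ) : ℝ := if u ≤ 0 then 0 else 1 - Real.exp (-u ^ 2)
def Phi (v : ℝ) : ℝ := 4 * Real.arctan v + 2 * π
def zc {d : ℕ} (z : EuclideanSpace ℝ (Fin d)) (j : ℕ) : ℝ :=
  if h : 1 ≤ j ∧ j - 1 < d then z ⟨j - 1, h.2⟩ else 0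
def phi {d : ℕ} (z : EuclideanSpace ℝ (Fin d)) (j : ℕ) : ℝ :=
  if j = 1 then -(Psi 1 * Phi (zc z 1))
  else Psi (-zc z (j - 1)) * Phi (-zc z j) - Psi (zc z (j - 1)) * Phi (zc z j)
def hfun (m i : ℕ) {d : ℕ} (z : EuclideanSpace ℝ (Fin d)) : ℝ :=
  if i ≤ m / 3 then phi z 1 + 3 * ∑ j ∈ Finset.Icc 1 (d / 2), phi z (2 * j)
  else if i ≤ 2 * m / 3 then phi z 1
  else phi z 1 + 3 * ∑ j ∈ Finset.Icc 1 (d / 2), phi z (2 * j + 1)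
def ff (m : ℕ) (Lf ε : ℝ) (i : ℕ) {d : ℕ} (z : EuclideanSpace ℝ (Fin d)) : ℝ :=
  300 * π * ε ^ 2 / (m * Lf) * hfun m i ((Real.sqrt m * Lf / (150 * π * ε)) • z)
def blkN {m d : ℕ} (x : EuclideanSpace ℝ (Fin m × Fin d)) (i : ℕ) :
    EuclideanSpace ℝ (Fin d) :=
  WithLp.toLp 2 (fun j => if h : 1 ≤ i ∧ i - 1 < m then x (⟨i - 1, h.2⟩, j) else 0)
def f0 (m : ℕ) (Lf ε : ℝ) {d : ℕ} (x : EuclideanSpace ℝ (Fin m × Fin d)) : ℝ :=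
  ∑ i ∈ Finset.Icc 1 m, ff m Lf ε i (blkN x i)
def l1norm {ι : Type*} [Fintype ι] (x : ι → ℝ) : ℝ := ∑ i, |x i|
def Jmat (p : ℕ) : Matrix (Fin (p - 1)) (Fin p) ℝ :=
  Matrix.of fun i j => if j.val = i.val then -1 else if j.val = i.val + 1 then 1 else 0
def Hmat (m d : ℕ) (Lf : ℝ) : Matrix (Fin (m - 1) × Fin d) (Fin m × Fin d) ℝ :=
  ((m : ℝ) * Lf) • (Jmat m ⊗ₖ (1 : Matrix (Fin d) (Fin d) ℝ))
def Mset (m₁ m₂ : ℕ) : Finset ℕ := (Finset.Icc 1 (3 * m₂ - 1)).image (· * m₁)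
def JM (m₁ m₂ : ℕ) : Matrix (Fin (3 * m₂ - 1)) (Fin (3 * m₁ * m₂)) ℝ :=
  Matrix.of fun i j =>
    if j.val + 1 = (i.val + 1) * m₁ then -1
    else if j.val = (i.val + 1) * m₁ then 1 else 0
def Abar (m₁ m₂ d : ℕ) (Lf : ℝ) :
    Matrix (Fin (3 * m₂ - 1) × Fin d) (Fin (3 * m₁ * m₂) × Fin d) ℝ :=
  ((3 * m₁ * m₂ : ℕ) * Lf) • (JM m₁ m₂ ⊗ₖ (1 : Matrix (Fin d) (Fin d) ℝ))
abbrev MCidx (m₁ m₂ : ℕ) := {k : Fin (3 * m₁ * m₂ - 1) // k.val + 1 ∉ Mset m₁ m₂}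
def JMC (m₁ m₂ : ℕ) : Matrix (MCidx m₁ m₂) (Fin (3 * m₁ * m₂)) ℝ :=
  Matrix.of fun k j => Jmat (3 * m₁ * m₂) k.val j
def Amat (m₁ m₂ d : ℕ) (Lf : ℝ) :
    Matrix (MCidx m₁ m₂ × Fin d) (Fin (3 * m₁ * m₂) × Fin d) ℝ :=
  ((3 * m₁ * m₂ : ℕ) * Lf) • (JMC m₁ m₂ ⊗ₖ (1 : Matrix (Fin d) (Fin d) ℝ))
def mvec {ι κ : Type*} [Fintype κ] (M : Matrix ι κ ℝ) (x : EuclideanSpace ℝ κ) :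
    EuclideanSpace ℝ ι :=
  WithLp.toLp 2 (fun i => ∑ j, M i j * x j)
def sNorm {ι κ : Type*} [Fintype ι] [Fintype κ] [DecidableEq κ] (M : Matrix ι κ ℝ) : ℝ :=
  ‖LinearMap.toContinuousLinearMap (Matrix.toEuclideanLin M)‖
def lamMax {ι : Type*} [Fintype ι] [DecidableEq ι] (M : Matrix ι ι ℝ) : ℝ :=
  sSup (spectrum ℝ M)
def lamMinPos {ι : Type*} [Fintype ι] [DecidableEq ι] (M : Matrix ι ι ℝ) : ℝ :=
  sInf (spectrum ℝ M ∩ Set.Ioi 0)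
def condNum {ι κ : Type*} [Fintype ι] [DecidableEq ι] [Fintype κ] (M : Matrix ι κ ℝ) : ℝ :=
  Real.sqrt (lamMax (M * Mᵀ) / lamMinPos (M * Mᵀ))
def gfun (m₁ m₂ d : ℕ) (β : ℝ) (x : EuclideanSpace ℝ (Fin (3 * m₁ * m₂) × Fin d)) : ℝ :=
  β * ∑ i ∈ Mset m₁ m₂, l1norm (fun j => blkN x i j - blkN x (i + 1) j)
def gbar (m₁ m₂ d : ℕ) (Lf β : ℝ)
    (y : EuclideanSpace ℝ (Fin (3 * m₂ - 1) × Fin d)) : ℝ :=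
  β / ((3 * m₁ * m₂ : ℕ) * Lf) * l1norm y
def IsProx {E : Type*} [NormedAddCommGroup E] [InnerProductSpace ℝ E]
    (η : ℝ) (ψ : E → ℝ) (x p : E) : Prop :=
  ∀ y, ψ p + ‖p - x‖ ^ 2 / (2 * η) ≤ ψ y + ‖y - x‖ ^ 2 / (2 * η)
def subdiff {E : Type*} [NormedAddCommGroup E] [InnerProductSpace ℝ E]
    (ψ : E → ℝ) (x : E) : Set E :=
  {v | ∀ y, ψ x + (inner ℝ v (y - x) : ℝ) ≤ ψ y}
def suppSub {d : ℕ} (z : EuclideanSpace ℝ (Fin d)) (k : ℕ) : Prop :=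
  ∀ j : Fin d, z j ≠ 0 → j.val + 1 ≤ k

/-- x is an ε̂-stationary point of instance 𝒫. -/
def IsStatP (m₁ m₂ d : ℕ) (Lf ε β εh : ℝ)
    (x : EuclideanSpace ℝ (Fin (3 * m₁ * m₂) × Fin d)) : Prop :=
  ∃ γ : EuclideanSpace ℝ (MCidx m₁ m₂ × Fin d), ∃ ξ ∈ subdiff (gfun m₁ m₂ d β) x,
    ‖gradient (f0 (3 * m₁ * m₂) Lf ε) x + mvec (Amat m₁ m₂ d Lf)ᵀ γ + ξ‖ ≤ εh ∧
    ‖mvec (Amat m₁ m₂ d Lf) x‖ ≤ εh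

/-- (x, y) is an ε̂-stationary point of the splitting reformulation (SP). -/
def IsStatSP (m₁ m₂ d : ℕ) (Lf ε β εh : ℝ)
    (x : EuclideanSpace ℝ (Fin (3 * m₁ * m₂) × Fin d))
    (y : EuclideanSpace ℝ (Fin (3 * m₂ - 1) × Fin d)) : Prop :=
  ∃ z₁ : EuclideanSpace ℝ (Fin (3 * m₂ - 1) × Fin d),
    ∃ z₂ : EuclideanSpace ℝ (MCidx m₁ m₂ × Fin d),
      Metric.infDist 0 ((· - z₁) '' subdiff (gbar m₁ m₂ d Lf β) y) ≤ εh ∧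
      ‖gradient (f0 (3 * m₁ * m₂) Lf ε) x + mvec (Abar m₁ m₂ d Lf)ᵀ z₁ +
        mvec (Amat m₁ m₂ d Lf)ᵀ z₂‖ ≤ εh ∧
      ‖y - mvec (Abar m₁ m₂ d Lf) x‖ ≤ εh ∧ ‖mvec (Amat m₁ m₂ d Lf) x‖ ≤ εh

/-- The sequence X follows Algorithm Class 1 on instance 𝒫. -/
def FollowsAC1 (m₁ m₂ d : ℕ) (Lf ε β : ℝ)
    (X : ℕ → EuclideanSpace ℝ (Fin (3 * m₁ * m₂) × Fin d)) : Prop :=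
  X 0 = 0 ∧ ∀ t, 1 ≤ t → ∃ η : ℝ, 0 < η ∧
    ∃ ξ ∈ Submodule.span ℝ (⋃ s ∈ Set.Iio t,
      ({X s, gradient (f0 (3 * m₁ * m₂) Lf ε) (X s),
        mvec ((Amat m₁ m₂ d Lf)ᵀ * Amat m₁ m₂ d Lf) (X s)} :
          Set (EuclideanSpace ℝ (Fin (3 * m₁ * m₂) × Fin d)))),
      ∃ p, IsProx η (gfun m₁ m₂ d β) ξ p ∧
        X t ∈ Submodule.span ℝ ({ξ, p} : Set (EuclideanSpace ℝ (Fin (3 * m₁ * m₂) × Fin d)))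

/-- The pair of sequences (X, Y) follows Algorithm Class 2 on the splitting
reformulation (SP) of instance 𝒫. -/
def FollowsAC2 (m₁ m₂ d : ℕ) (Lf ε β : ℝ)
    (X : ℕ → EuclideanSpace ℝ (Fin (3 * m₁ * m₂) × Fin d))
    (Y : ℕ → EuclideanSpace ℝ (Fin (3 * m₂ - 1) × Fin d)) : Prop :=
  X 0 = 0 ∧ Y 0 = 0 ∧ ∀ t, 1 ≤ t →
    (X t ∈ Submodule.span ℝ (⋃ s ∈ Set.Iio t,
      ({X s, gradient (f0 (3 * m₁ * m₂) Lf ε) (X s),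
        mvec ((Amat m₁ m₂ d Lf)ᵀ * Amat m₁ m₂ d Lf) (X s),
        mvec ((Abar m₁ m₂ d Lf)ᵀ * Abar m₁ m₂ d Lf) (X s),
        mvec (Abar m₁ m₂ d Lf)ᵀ (Y s)} :
          Set (EuclideanSpace ℝ (Fin (3 * m₁ * m₂) × Fin d))))) ∧
    ∃ η : ℝ, 0 < η ∧
      ∃ ξ ∈ Submodule.span ℝ (⋃ s ∈ Set.Iio t,
        ({Y s, mvec (Abar m₁ m₂ d Lf * (Abar m₁ m₂ d Lf)ᵀ) (Y s),
          mvec (Abar m₁ m₂ d Lf) (X s)} :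
            Set (EuclideanSpace ℝ (Fin (3 * m₂ - 1) × Fin d)))),
        ∃ p, IsProx η (gbar m₁ m₂ d Lf β) ξ p ∧
          Y t ∈ Submodule.span ℝ
            ({ξ, p} : Set (EuclideanSpace ℝ (Fin (3 * m₂ - 1) × Fin d)))

lemma idx_lt {i M : ℕ} (h1 : 1 ≤ i) (h2 : i ≤ M) : i - 1 < M := by omega

lemma euc_norm_sq {ι : Type*} [Fintype ι] (z : EuclideanSpace ℝ ι) :
    ‖z‖ ^ 2 = ∑ i, z i ^ 2 := by
  rw [EuclideanSpace.norm_eq, Real.sq_sqrt (by positivity)]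
  simp [Real.norm_eq_abs, sq_abs]

lemma mvec_apply' {ι κ : Type*} [Fintype κ] (M : Matrix ι κ ℝ) (x : EuclideanSpace ℝ κ)
    (i : ι) : mvec M x i = ∑ j, M i j * x j := rfl

lemma kron_entry_ne {q dd : ℕ} {P : Type*} (J : Matrix P (Fin q) ℝ) (c : ℝ)
    {k : P} {l : Fin dd} {a : Fin q} {b : Fin dd}
    (h : (c • (J ⊗ₖ (1 : Matrix (Fin dd) (Fin dd) ℝ))) (k, l) (a, b) ≠ 0) :
    J k a ≠ 0 ∧ l = b := by
  simp only [Matrix.smul_apply, Matrix.kroneckerMap_apply, smul_eq_mul, Matrix.one_apply] at h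
  constructor
  · intro hz; exact h (by simp [hz])
  · by_contra hlb; exact h (by simp [hlb])

lemma aux_tri {q dd : ℕ} {P : Type*} [Fintype P] (J : Matrix P (Fin q) ℝ) (c : ℝ)
    (x : EuclideanSpace ℝ (Fin q × Fin dd)) (a : Fin q) (jc : Fin dd)
    (h : mvec ((c • (J ⊗ₖ (1 : Matrix (Fin dd) (Fin dd) ℝ)))ᵀ *
      (c • (J ⊗ₖ (1 : Matrix (Fin dd) (Fin dd) ℝ)))) x (a, jc) ≠ 0) :
    ∃ (i' : Fin q) (k : P), J k a ≠ 0 ∧ J k i' ≠ 0 ∧ x (i', jc) ≠ 0 := by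
  rw [mvec_apply'] at h
  obtain ⟨⟨i', jc'⟩, -, hterm⟩ := Finset.exists_ne_zero_of_sum_ne_zero h
  obtain ⟨hM, hx⟩ := mul_ne_zero_iff.mp hterm
  rw [Matrix.mul_apply] at hM
  obtain ⟨⟨k, l⟩, -, h2⟩ := Finset.exists_ne_zero_of_sum_ne_zero hM
  obtain ⟨h3, h4⟩ := mul_ne_zero_iff.mp h2
  rw [Matrix.transpose_apply] at h3
  obtain ⟨hJa, hl⟩ := kron_entry_ne J c h3
  obtain ⟨hJi, hl'⟩ := kron_entry_ne J c h4
  subst hl; subst hl'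
  exact ⟨i', k, hJa, hJi, hx⟩

lemma aux_mulT {q dd : ℕ} {P : Type*} [Fintype P] (J : Matrix P (Fin q) ℝ) (c : ℝ)
    (y : EuclideanSpace ℝ (P × Fin dd)) (a : Fin q) (jc : Fin dd)
    (h : mvec (c • (J ⊗ₖ (1 : Matrix (Fin dd) (Fin dd) ℝ)))ᵀ y (a, jc) ≠ 0) :
    ∃ k : P, J k a ≠ 0 ∧ y (k, jc) ≠ 0 := by
  rw [mvec_apply'] at h
  obtain ⟨⟨k, l⟩, -, hterm⟩ := Finset.exists_ne_zero_of_sum_ne_zero h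
  obtain ⟨hM, hy⟩ := mul_ne_zero_iff.mp hterm
  rw [Matrix.transpose_apply] at hM
  obtain ⟨hJ, hl⟩ := kron_entry_ne J c hM
  subst hl
  exact ⟨k, hJ, hy⟩

lemma aux_mulA {q dd : ℕ} {P : Type*} [Fintype P] (J : Matrix P (Fin q) ℝ) (c : ℝ)
    (x : EuclideanSpace ℝ (Fin q × Fin dd)) (k : P) (jc : Fin dd)
    (h : mvec (c • (J ⊗ₖ (1 : Matrix (Fin dd) (Fin dd) ℝ))) x (k, jc) ≠ 0) :
    ∃ a : Fin q, J k a ≠ 0 ∧ x (a, jc) ≠ 0 := by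
  rw [mvec_apply'] at h
  obtain ⟨⟨a, b⟩, -, hterm⟩ := Finset.exists_ne_zero_of_sum_ne_zero h
  obtain ⟨hM, hx⟩ := mul_ne_zero_iff.mp hterm
  obtain ⟨hJ, hl⟩ := kron_entry_ne J c hM
  subst hl
  exact ⟨a, hJ, hx⟩

lemma Jmat_ne {p : ℕ} {k : Fin (p - 1)} {j : Fin p} (h : Jmat p k j ≠ 0) :
    j.val = k.val ∨ j.val = k.val + 1 := by
  by_contra hc
  push_neg at hc
  simp [Jmat, hc.1, hc.2] at h

lemma JM_ne {m₁ m₂ : ℕ} {k : Fin (3 * m₂ - 1)} {j : Fin (3 * m₁ * m₂)}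
    (h : JM m₁ m₂ k j ≠ 0) :
    j.val + 1 = (k.val + 1) * m₁ ∨ j.val = (k.val + 1) * m₁ := by
  by_contra hc
  push_neg at hc
  simp [JM, hc.1, hc.2] at h

lemma mul_ne_mul_succ {m₁ : ℕ} (h : 2 ≤ m₁) (a b : ℕ) : a * m₁ ≠ b * m₁ + 1 := by
  intro he
  have h1 : a * m₁ % m₁ = 0 := Nat.mul_mod_left a m₁
  have h2 : (b * m₁ + 1) % m₁ = 1 % m₁ := by
    rw [Nat.add_comm, Nat.add_mul_mod_self_right]
  have h3 : 1 % m₁ = 1 := Nat.mod_eq_of_lt (by omega)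
  rw [he, h2, h3] at h1
  omega

lemma blkN_eq {m' dd : ℕ} (x : EuclideanSpace ℝ (Fin m' × Fin dd)) {i : ℕ}
    (h : 1 ≤ i ∧ i - 1 < m') (jc : Fin dd) :
    blkN x i jc = x (⟨i - 1, h.2⟩, jc) := by
  exact dif_pos h

lemma blkN_ne_of {m' dd : ℕ} (x : EuclideanSpace ℝ (Fin m' × Fin dd)) (i' : Fin m')
    (jc : Fin dd) (i : ℕ) (h1 : 1 ≤ i) (hi : i'.val = i - 1)
    (hx : x (i', jc) ≠ 0) : blkN x i jc ≠ 0 := by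
  have hc : 1 ≤ i ∧ i - 1 < m' := ⟨h1, by have := i'.isLt; omega⟩
  rw [blkN_eq x hc]
  have he : (⟨i - 1, hc.2⟩ : Fin m') = i' := Fin.ext hi.symm
  rw [he]; exact hx

lemma JM_col_lt {m₁ m₂ : ℕ} (hm₁ : 1 ≤ m₁) (k : Fin (3 * m₂ - 1)) :
    (k.val + 1) * m₁ < 3 * m₁ * m₂ := by
  have hk := k.isLt
  have h1 : (k.val + 1) * m₁ ≤ (3 * m₂ - 1) * m₁ := Nat.mul_le_mul_right _ (by omega)
  have h2 : (3 * m₂ - 1 + 1) * m₁ = 3 * m₁ * m₂ := by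
    rw [Nat.sub_add_cancel (by omega)]; ring
  have h3 : (3 * m₂ - 1 + 1) * m₁ = (3 * m₂ - 1) * m₁ + m₁ := by ring
  omega

lemma JM_mul_T {m₁ m₂ : ℕ} (hm₁ : 2 ≤ m₁) :
    JM m₁ m₂ * (JM m₁ m₂)ᵀ = (2 : ℝ) • 1 := by
  ext k k'
  rw [Matrix.mul_apply]
  simp only [Matrix.transpose_apply, Matrix.smul_apply, Matrix.one_apply, smul_eq_mul]
  by_cases hkk : k = k'
  · subst hkk
    have hlt : (k.val + 1) * m₁ < 3 * m₁ * m₂ := JM_col_lt (by omega) k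
    have hge : m₁ ≤ (k.val + 1) * m₁ := Nat.le_mul_of_pos_left _ (by omega)
    rw [Finset.sum_eq_add (⟨(k.val + 1) * m₁ - 1, by omega⟩ : Fin (3 * m₁ * m₂))
      (⟨(k.val + 1) * m₁, hlt⟩ : Fin (3 * m₁ * m₂))
      (by simp only [ne_eq, Fin.mk.injEq]; omega)
      ?_ (by simp) (by simp)]
    · have e1 : JM m₁ m₂ k ⟨(k.val + 1) * m₁ - 1, by omega⟩ = -1 := by
        simp only [JM, Matrix.of_apply]
        rw [if_pos (by omega)]
      have e2 : JM m₁ m₂ k ⟨(k.val + 1) * m₁, hlt⟩ = 1 := by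
        simp only [JM, Matrix.of_apply]
        rw [if_neg (by omega)]
        simp
      rw [e1, e2]
      norm_num
    · intro j _ hj
      have hj1 : j.val ≠ (k.val + 1) * m₁ - 1 := fun h => hj.1 (Fin.ext h)
      have hj2 : j.val ≠ (k.val + 1) * m₁ := fun h => hj.2 (Fin.ext h)
      have hz : JM m₁ m₂ k j = 0 := by
        simp only [JM, Matrix.of_apply]
        rw [if_neg (by omega), if_neg (by omega)]
      rw [hz, zero_mul]
  · rw [if_neg hkk, mul_zero]
    apply Finset.sum_eq_zero
    intro j _
    by_contra hne
    obtain ⟨h1, h2⟩ := mul_ne_zero_iff.mp hne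
    have hk' : k.val ≠ k'.val := fun h => hkk (Fin.ext h)
    rcases JM_ne h1 with h3 | h3 <;> rcases JM_ne h2 with h4 | h4
    · exact hk' (by
        have := Nat.eq_of_mul_eq_mul_right (show 0 < m₁ by omega) (h3 ▸ h4 ▸ rfl : (k.val + 1) * m₁ = (k'.val + 1) * m₁)
        omega)
    · exact mul_ne_mul_succ hm₁ (k.val + 1) (k'.val + 1) (by omega)
    · exact mul_ne_mul_succ hm₁ (k'.val + 1) (k.val + 1) (by omega)
    · exact hk' (by
        have := Nat.eq_of_mul_eq_mul_right (show 0 < m₁ by omega) (h3 ▸ h4 ▸ rfl : (k.val + 1) * m₁ = (k'.val + 1) * m₁)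
        omega)

lemma Abar_mul_T {m₁ m₂ d : ℕ} (Lf : ℝ) (hm₁ : 2 ≤ m₁) :
    Abar m₁ m₂ d Lf * (Abar m₁ m₂ d Lf)ᵀ
      = (2 * ((3 : ℝ) * m₁ * m₂) ^ 2 * Lf ^ 2) • 1 := by
  unfold Abar
  rw [Matrix.transpose_smul, Matrix.smul_mul, Matrix.mul_smul, smul_smul,
    ← Matrix.kroneckerMap_transpose, Matrix.transpose_one, ← Matrix.mul_kronecker_mul,
    JM_mul_T hm₁, Matrix.one_mul, Matrix.smul_kronecker, Matrix.one_kronecker_one,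
    smul_smul]
  congr 1
  push_cast
  ring

/-- Support propagation for Algorithm Class 2 operators: (a) span{AᵀAx, ĀᵀĀx},
(b) Āᵀy, (c) Āx, (d) ĀĀᵀ = 2m²L_f²·I (hence supp(ĀĀᵀy) = supp(y)),
(e) prox_{ηḡ}. -/
theorem stmt_16 (Lf ε : ℝ) (hLf : 0 < Lf) (hε0 : 0 < ε) (hε1 : ε < 1)
    (m₁ m₂ : ℕ) (hm₁ : 2 ≤ m₁) (hm₂ : 1 ≤ m₂) (heven : Even (m₁ * m₂))
    (d : ℕ) (hd : 5 ≤ d) (hodd : Odd d)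
    (β : ℝ) (hβ : (50 * π + 1 + sNorm (Amat m₁ m₂ d Lf)) * Real.sqrt (3 * m₁ * m₂) * ε < β)
    (x : EuclideanSpace ℝ (Fin (3 * m₁ * m₂) × Fin d))
    (y : EuclideanSpace ℝ (Fin (3 * m₂ - 1) × Fin d)) :
    (∀ xh ∈ Submodule.span ℝ
        ({mvec ((Amat m₁ m₂ d Lf)ᵀ * Amat m₁ m₂ d Lf) x,
          mvec ((Abar m₁ m₂ d Lf)ᵀ * Abar m₁ m₂ d Lf) x} :
            Set (EuclideanSpace ℝ (Fin (3 * m₁ * m₂) × Fin d))),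
      ∀ i, 1 ≤ i → i ≤ 3 * m₁ * m₂ → ∀ jc : Fin d, blkN xh i jc ≠ 0 →
        blkN x (i - 1) jc ≠ 0 ∨ blkN x i jc ≠ 0 ∨ blkN x (i + 1) jc ≠ 0) ∧
    (∀ i, 1 ≤ i → i ≤ 3 * m₁ * m₂ →
      ((i - 1 ∉ Mset m₁ m₂ ∧ i ∉ Mset m₁ m₂) →
        blkN (mvec (Abar m₁ m₂ d Lf)ᵀ y) i = 0) ∧
      (∀ j, 1 ≤ j → j ≤ 3 * m₂ - 1 → i - 1 = j * m₁ →
        ∀ jc : Fin d, blkN (mvec (Abar m₁ m₂ d Lf)ᵀ y) i jc ≠ 0 → blkN y j jc ≠ 0) ∧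
      (∀ j, 1 ≤ j → j ≤ 3 * m₂ - 1 → i = j * m₁ →
        ∀ jc : Fin d, blkN (mvec (Abar m₁ m₂ d Lf)ᵀ y) i jc ≠ 0 → blkN y j jc ≠ 0)) ∧
    (∀ j, 1 ≤ j → j ≤ 3 * m₂ - 1 → ∀ jc : Fin d,
      blkN (mvec (Abar m₁ m₂ d Lf) x) j jc ≠ 0 →
        blkN x (j * m₁) jc ≠ 0 ∨ blkN x (j * m₁ + 1) jc ≠ 0) ∧
    (Abar m₁ m₂ d Lf * (Abar m₁ m₂ d Lf)ᵀ =
        (2 * (3 * m₁ * m₂ : ℝ) ^ 2 * Lf ^ 2) • 1 ∧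
      ∀ y' : EuclideanSpace ℝ (Fin (3 * m₂ - 1) × Fin d),
        {idx | mvec (Abar m₁ m₂ d Lf * (Abar m₁ m₂ d Lf)ᵀ) y' idx ≠ 0} =
          {idx | y' idx ≠ 0}) ∧
    (∀ η : ℝ, 0 < η → ∀ p, IsProx η (gbar m₁ m₂ d Lf β) y p →
      ∀ j, 1 ≤ j → j ≤ 3 * m₂ - 1 → ∀ jc : Fin d,
        blkN p j jc ≠ 0 → blkN y j jc ≠ 0) := by
  have hmpos : 0 < 3 * m₁ * m₂ := Nat.mul_pos (Nat.mul_pos (by omega) (by omega)) (by omega)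
  refine ⟨?_, ?_, ?_, ⟨Abar_mul_T Lf hm₁, ?_⟩, ?_⟩
  -- Part (a)
  · intro xh hxh i hi1 hi2 jc hne
    have hc : 1 ≤ i ∧ i - 1 < 3 * m₁ * m₂ := ⟨hi1, idx_lt hi1 hi2⟩
    obtain ⟨a, b, hab⟩ := Submodule.mem_span_pair.mp hxh
    rw [blkN_eq _ hc] at hne
    rw [← hab] at hne
    have hne' : a * mvec ((Amat m₁ m₂ d Lf)ᵀ * Amat m₁ m₂ d Lf) x (⟨i - 1, hc.2⟩, jc)
        + b * mvec ((Abar m₁ m₂ d Lf)ᵀ * Abar m₁ m₂ d Lf) x (⟨i - 1, hc.2⟩, jc) ≠ 0 := hne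
    have hval : ((⟨i - 1, hc.2⟩ : Fin (3 * m₁ * m₂)) : ℕ) = i - 1 := rfl
    have hor : mvec ((Amat m₁ m₂ d Lf)ᵀ * Amat m₁ m₂ d Lf) x (⟨i - 1, hc.2⟩, jc) ≠ 0
        ∨ mvec ((Abar m₁ m₂ d Lf)ᵀ * Abar m₁ m₂ d Lf) x (⟨i - 1, hc.2⟩, jc) ≠ 0 := by
      by_contra hcon
      push_neg at hcon
      rw [hcon.1, hcon.2] at hne'
      simp at hne'
    have hfin : ∃ i' : Fin (3 * m₁ * m₂),
        (i'.val + 1 = i - 1 ∨ i'.val = i - 1 ∨ i'.val = i) ∧ x (i', jc) ≠ 0 := by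
      rcases hor with h1 | h1
      · unfold Amat at h1
        obtain ⟨i', k, hJa, hJi, hx⟩ := aux_tri _ _ _ _ _ h1
        have h2 := Jmat_ne hJa
        have h3 := Jmat_ne hJi
        rw [hval] at h2
        exact ⟨i', by omega, hx⟩
      · unfold Abar at h1
        obtain ⟨i', k, hJa, hJi, hx⟩ := aux_tri _ _ _ _ _ h1
        have h2 := JM_ne hJa
        have h3 := JM_ne hJi
        rw [hval] at h2
        exact ⟨i', by omega, hx⟩
    obtain ⟨i', hcase, hx⟩ := hfin
    rcases hcase with h3 | h3 | h3
    · exact Or.inl (blkN_ne_of x i' jc (i - 1) (by omega) (by omega) hx)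
    · exact Or.inr (Or.inl (blkN_ne_of x i' jc i hi1 (by omega) hx))
    · exact Or.inr (Or.inr (blkN_ne_of x i' jc (i + 1) (by omega) (by omega) hx))
  -- Part (b)
  · intro i hi1 hi2
    have hc : 1 ≤ i ∧ i - 1 < 3 * m₁ * m₂ := ⟨hi1, idx_lt hi1 hi2⟩
    have hval : ((⟨i - 1, hc.2⟩ : Fin (3 * m₁ * m₂)) : ℕ) = i - 1 := rfl
    refine ⟨?_, ?_, ?_⟩
    · rintro ⟨hM1, hM2⟩
      ext jc
      show blkN (mvec (Abar m₁ m₂ d Lf)ᵀ y) i jc = (0 : ℝ)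
      rw [blkN_eq _ hc, mvec_apply']
      apply Finset.sum_eq_zero
      rintro ⟨k, l⟩ -
      have hz : JM m₁ m₂ k ⟨i - 1, hc.2⟩ = 0 := by
        by_contra hnz
        rcases JM_ne hnz with h | h <;> rw [hval] at h
        · exact hM2 (Finset.mem_image.mpr ⟨k.val + 1,
            Finset.mem_Icc.mpr ⟨by omega, by have := k.isLt; omega⟩,
            by show (k.val + 1) * m₁ = i; omega⟩)
        · exact hM1 (Finset.mem_image.mpr ⟨k.val + 1,
            Finset.mem_Icc.mpr ⟨by omega, by have := k.isLt; omega⟩,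
            by show (k.val + 1) * m₁ = i - 1; omega⟩)
      rw [Matrix.transpose_apply]
      unfold Abar
      simp [Matrix.smul_apply, Matrix.kroneckerMap_apply, hz]
    · intro j hj1 hj2 hij jc hne
      rw [blkN_eq _ hc] at hne
      unfold Abar at hne
      obtain ⟨k, hJ, hy⟩ := aux_mulT _ _ _ _ _ hne
      rcases JM_ne hJ with h | h <;> rw [hval] at h
      · exact absurd (by omega : (k.val + 1) * m₁ = j * m₁ + 1)
          (mul_ne_mul_succ hm₁ _ _)
      · have hjk : j = k.val + 1 :=
          Nat.eq_of_mul_eq_mul_right (by omega) (by omega : j * m₁ = (k.val + 1) * m₁)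
        exact blkN_ne_of y k jc j hj1 (by omega) hy
    · intro j hj1 hj2 hij jc hne
      rw [blkN_eq _ hc] at hne
      unfold Abar at hne
      obtain ⟨k, hJ, hy⟩ := aux_mulT _ _ _ _ _ hne
      rcases JM_ne hJ with h | h <;> rw [hval] at h
      · have hjk : j = k.val + 1 :=
          Nat.eq_of_mul_eq_mul_right (by omega) (by omega : j * m₁ = (k.val + 1) * m₁)
        exact blkN_ne_of y k jc j hj1 (by omega) hy
      · exact absurd (by omega : j * m₁ = (k.val + 1) * m₁ + 1)
          (mul_ne_mul_succ hm₁ _ _)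
  -- Part (c)
  · intro j hj1 hj2 jc hne
    have hc : 1 ≤ j ∧ j - 1 < 3 * m₂ - 1 := ⟨hj1, idx_lt hj1 hj2⟩
    rw [blkN_eq _ hc] at hne
    unfold Abar at hne
    obtain ⟨a, hJ, hx⟩ := aux_mulA _ _ _ _ _ hne
    have h := JM_ne hJ
    have hval : ((⟨j - 1, hc.2⟩ : Fin (3 * m₂ - 1)) : ℕ) = j - 1 := rfl
    rw [hval] at h
    have hj' : j - 1 + 1 = j := by omega
    rw [hj'] at h
    rcases h with h | h
    · exact Or.inl (blkN_ne_of x a jc (j * m₁) (by omega) (by omega) hx)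
    · exact Or.inr (blkN_ne_of x a jc (j * m₁ + 1) (by omega) (by omega) hx)
  -- Part (d), support statement
  · intro y'
    have hm1R : (0 : ℝ) < m₁ := by exact_mod_cast (by omega : 0 < m₁)
    have hm2R : (0 : ℝ) < m₂ := by exact_mod_cast (by omega : 0 < m₂)
    have hs : (0 : ℝ) < 2 * ((3 : ℝ) * m₁ * m₂) ^ 2 * Lf ^ 2 :=
      mul_pos (mul_pos (by norm_num)
        (pow_pos (mul_pos (mul_pos (by norm_num) hm1R) hm2R) 2)) (pow_pos hLf 2)
    ext idx
    simp only [Set.mem_setOf_eq]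
    rw [Abar_mul_T Lf hm₁]
    have happ : mvec ((2 * ((3 : ℝ) * m₁ * m₂) ^ 2 * Lf ^ 2) •
        (1 : Matrix (Fin (3 * m₂ - 1) × Fin d) (Fin (3 * m₂ - 1) × Fin d) ℝ)) y' idx
        = (2 * ((3 : ℝ) * m₁ * m₂) ^ 2 * Lf ^ 2) * y' idx := by
      rw [mvec_apply']
      simp [Matrix.smul_apply, Matrix.one_apply, mul_ite, ite_mul, Finset.sum_ite_eq]
    rw [happ]
    simp [mul_ne_zero_iff, ne_of_gt hs]
  -- Part (e)
  · have hsn : (0 : ℝ) ≤ sNorm (Amat m₁ m₂ d Lf) := by unfold sNorm; exact norm_nonneg _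
    have hβ0 : 0 < β := by
      refine lt_of_le_of_lt ?_ hβ
      have h1 : (0 : ℝ) ≤ 50 * π + 1 + sNorm (Amat m₁ m₂ d Lf) := by
        nlinarith [Real.pi_pos]
      exact mul_nonneg (mul_nonneg h1 (Real.sqrt_nonneg _)) hε0.le
    intro η hη p hprox j hj1 hj2 jc hpne
    have hc : 1 ≤ j ∧ j - 1 < 3 * m₂ - 1 := ⟨hj1, idx_lt hj1 hj2⟩
    rw [blkN_eq _ hc] at hpne ⊢
    intro hy0
    set idx : Fin (3 * m₂ - 1) × Fin d := (⟨j - 1, hc.2⟩, jc) with hidx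
    set q : EuclideanSpace ℝ (Fin (3 * m₂ - 1) × Fin d) := WithLp.toLp 2 (Function.update p idx 0) with hq
    have hl1 : l1norm q < l1norm p := by
      unfold l1norm
      apply Finset.sum_lt_sum
      · intro r _
        by_cases hr : r = idx
        · subst hr
          rw [hq, WithLp.ofLp_toLp, Function.update_self]
          simp [abs_nonneg]
        · rw [hq, WithLp.ofLp_toLp, Function.update_of_ne hr]
      · refine ⟨idx, Finset.mem_univ _, ?_⟩
        rw [hq, WithLp.ofLp_toLp, Function.update_self]
        simpa using abs_pos.mpr hpne
    have hsub : ∀ (u v : EuclideanSpace ℝ (Fin (3 * m₂ - 1) × Fin d)) r,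
        (u - v) r = u r - v r := fun _ _ _ => rfl
    have hnrm : ‖q - y‖ ^ 2 < ‖p - y‖ ^ 2 := by
      rw [euc_norm_sq, euc_norm_sq]
      apply Finset.sum_lt_sum
      · intro r _
        rw [hsub, hsub]
        by_cases hr : r = idx
        · subst hr
          rw [hq, WithLp.ofLp_toLp, Function.update_self, hy0]
          simp
          positivity
        · rw [hq, WithLp.ofLp_toLp, Function.update_of_ne hr]
      · refine ⟨idx, Finset.mem_univ _, ?_⟩
        rw [hsub, hsub, hq, WithLp.ofLp_toLp, Function.update_self, hy0]
        have hp2 : (0 : ℝ) < (p idx) ^ 2 := by positivity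
        simpa using hp2
    have hcg : 0 < β / ((3 * m₁ * m₂ : ℕ) * Lf) :=
      div_pos hβ0 (mul_pos (by exact_mod_cast hmpos) hLf)
    have hg : gbar m₁ m₂ d Lf β q < gbar m₁ m₂ d Lf β p := by
      unfold gbar
      exact mul_lt_mul_of_pos_left hl1 hcg
    have h2η : (0 : ℝ) < 2 * η := by linarith
    have hdiv : ‖q - y‖ ^ 2 / (2 * η) ≤ ‖p - y‖ ^ 2 / (2 * η) := by
      apply div_le_div_of_nonneg_right hnrm.le h2η.le
    have hp := hprox q
    linarith

end
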